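/- If T is a consistent, complete, recursively axiomatized first-order theory extending Peano Arithmetic, then there exists at least one standard sentence s such that T proves remote(⁰⌜s⌝); consequently the defining condition of 𝔎 (the minimal code of a proof of a remote sentence) is satisfiable in T. -/

import Mathlib

/-!
Work in a model `M` of `T`; by completeness, truth in `M` is provability in `T`. The Gödel
sentence `g` is false in `M`, so it has proofs in `M`, but no standard numeral is one of them:
its least proof `k` is nonstandard. Let `d = D(E_g(v))`. If `d` is true it is provable, so its
least proof is a numeral, hence below `k`. If `d` is false, the diagonal property says that some
proof of `d` lies below the least proof of `g`. Either way `remote(⌜g⌝)` holds in `M`, and then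
the least number principle in `M`, applied to the proofs of remote sentences (which include
the proofs of `g`), produces `𝔎`.
-/

open FirstOrder FirstOrder.Language

namespace GodelStalk

/-- Function symbols of the first-order language of arithmetic:
zero, successor, addition, multiplication. -/
inductive ArithFunc : ℕ → Type
  | zero : ArithFunc 0
  | succ : ArithFunc 1
  | add : ArithFunc 2
  | mul : ArithFunc 2

/-- Relation symbols of the first-order language of arithmetic: `≤`. -/
inductive ArithRel : ℕ → Type
  | le : ArithRel 2

/-- The first-order language of arithmetic. -/
def Larith : FirstOrder.Language := ⟨ArithFunc, ArithRel⟩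

/-- The numeral `⁰n`: `n`-many repeated applications of the successor symbol to zero. -/
def num {α : Type} : ℕ → Larith.Term α
  | 0 => Term.func ArithFunc.zero ![]
  | n + 1 => Term.func ArithFunc.succ ![num n]

/-- Successor term. -/
def succT {α : Type} (t : Larith.Term α) : Larith.Term α :=
  Term.func ArithFunc.succ ![t]

/-- Addition term. -/
def addT {α : Type} (t u : Larith.Term α) : Larith.Term α :=
  Term.func ArithFunc.add ![t, u]

/-- Multiplication term. -/
def mulT {α : Type} (t u : Larith.Term α) : Larith.Term α :=
  Term.func ArithFunc.mul ![t, u]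

/-- The formula `t ≤ u`. -/
def leF {α : Type} (t u : Larith.Term α) : Larith.Formula α :=
  Relations.formula₂ ArithRel.le t u

/-- The formula `t < u`, rendered as `S t ≤ u`. -/
def ltF {α : Type} (t u : Larith.Term α) : Larith.Formula α :=
  leF (succT t) u

/-- Universal quantification over one extra variable. -/
noncomputable def all1 {α : Type} (φ : Larith.Formula (α ⊕ Fin 1)) : Larith.Formula α :=
  Formula.iAlls (Fin 1) φ

/-- Existential quantification over one extra variable. -/
noncomputable def ex1 {α : Type} (φ : Larith.Formula (α ⊕ Fin 1)) : Larith.Formula α :=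
  Formula.iExs (Fin 1) φ

/-- Substitute a term for the unique free variable of a formula. -/
def app1 {α : Type} (φ : Larith.Formula (Fin 1)) (t : Larith.Term α) : Larith.Formula α :=
  φ.subst fun _ => t

/-- Substitute two terms for the two free variables of a formula. -/
def app2 {α : Type} (φ : Larith.Formula (Fin 2)) (t u : Larith.Term α) : Larith.Formula α :=
  φ.subst ![t, u]

/-- Substitute a term for the distinguished (`Sum.inr`) free variable of a formula. -/
def substLast {α : Type} (φ : Larith.Formula (α ⊕ Fin 1)) (t : Larith.Term α) :
    Larith.Formula α :=
  φ.subst (Sum.elim Term.var fun _ => t)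

/-- `isMinOf φ t` expresses `t = min z : φ(z)`, i.e. `φ(t) ∧ ∀ w < t, ¬φ(w)`. -/
noncomputable def isMinOf {α : Type} (φ : Larith.Formula (α ⊕ Fin 1)) (t : Larith.Term α) :
    Larith.Formula α :=
  substLast φ t ⊓ all1 (ltF (Term.var (Sum.inr 0)) (t.relabel Sum.inl) ⟹ ∼φ)

/-- `minProofOf pf c t` expresses `t = min z : pf(z, c)`. -/
noncomputable def minProofOf {α : Type} (pf : Larith.Formula (Fin 2)) (c t : Larith.Term α) :
    Larith.Formula α :=
  isMinOf (app2 pf (Term.var (Sum.inr 0)) (c.relabel Sum.inl)) t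

/-- Provability within the theory `T` (semantic consequence, which by the Gödel
completeness theorem coincides with first-order provability). -/
def Proves (T : Larith.Theory) (φ : Larith.Sentence) : Prop :=
  T ⊨ᵇ φ

/-- `T` is consistent. -/
def Consistent (T : Larith.Theory) : Prop :=
  ¬ Proves T ⊥

/-- `T` is complete: it decides every sentence. -/
def Complete (T : Larith.Theory) : Prop :=
  ∀ φ : Larith.Sentence, Proves T φ ∨ Proves T (∼φ)

/-- Universal closure over `Fin k`-many free variables. -/
noncomputable def closure {k : ℕ} (φ : Larith.Formula (Fin k)) : Larith.Sentence :=
  Formula.iAlls (Fin k) (φ.relabel Sum.inr)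

/-- The axioms of Robinson arithmetic `Q` (with `≤` defined from addition). -/
noncomputable def QTheory : Larith.Theory :=
  { closure (∼(Term.equal (succT (Term.var (0 : Fin 1))) (num 0))),
    closure (Term.equal (succT (Term.var (0 : Fin 2))) (succT (Term.var 1)) ⟹
      Term.equal (Term.var 0) (Term.var (1 : Fin 2))),
    closure (∼(Term.equal (Term.var (0 : Fin 1)) (num 0)) ⟹
      ex1 (Term.equal (Term.var (Sum.inl 0)) (succT (Term.var (Sum.inr (0 : Fin 1)))) :
        Larith.Formula (Fin 1 ⊕ Fin 1))),
    closure (Term.equal (addT (Term.var (0 : Fin 1)) (num 0)) (Term.var 0)),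
    closure (Term.equal (addT (Term.var (0 : Fin 2)) (succT (Term.var 1)))
      (succT (addT (Term.var 0) (Term.var (1 : Fin 2))))),
    closure (Term.equal (mulT (Term.var (0 : Fin 1)) (num 0)) (num 0)),
    closure (Term.equal (mulT (Term.var (0 : Fin 2)) (succT (Term.var 1)))
      (addT (mulT (Term.var 0) (Term.var 1)) (Term.var (0 : Fin 2)))),
    closure ((leF (Term.var (0 : Fin 2)) (Term.var 1)) ⇔
      ex1 (Term.equal (addT (Term.var (Sum.inr (0 : Fin 1))) (Term.var (Sum.inl 0)))
        (Term.var (Sum.inl (1 : Fin 2))))) }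

/-- The induction axiom for a formula `φ` with parameters `Fin k` and induction
variable the distinguished `Sum.inr` variable. -/
noncomputable def inductionSentence {k : ℕ} (φ : Larith.Formula (Fin k ⊕ Fin 1)) :
    Larith.Sentence :=
  closure ((substLast φ (num 0) ⊓
      all1 (φ ⟹ φ.subst (Sum.elim (Term.var ∘ Sum.inl)
        fun _ => succT (Term.var (Sum.inr 0))))) ⟹
    all1 φ)

/-- Peano Arithmetic: Robinson arithmetic together with the induction scheme. -/
noncomputable def PATheory : Larith.Theory :=
  QTheory ∪ { σ | ∃ (k : ℕ) (φ : Larith.Formula (Fin k ⊕ Fin 1)), σ = inductionSentence φ }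


/-! ### The extension `E_s(v)`, `remote`, and `𝔎` (minimality version) -/

/-- `extFormulaAt pf c t` is the extension formula `E_s` of the sentence `s` with
Gödel code `c`, evaluated at the term `t`:
`∀x ∀y (Proof_T(x, t) ∧ [y = min z : Proof_T(z, ⁰c)] → x ≥ y)`. -/
noncomputable def extFormulaAt {α : Type} (pf : Larith.Formula (Fin 2)) (c : ℕ)
    (t : Larith.Term α) : Larith.Formula α :=
  Formula.iAlls (Fin 2)
    ((app2 pf (Term.var (Sum.inr 0)) (t.relabel Sum.inl) ⊓
        minProofOf pf (num c) (Term.var (Sum.inr 1))) ⟹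
      leF (Term.var (Sum.inr 1)) (Term.var (Sum.inr 0)))

/-- The extension `E_s(v)` of the sentence `s` with Gödel code `c`, as a formula
in the single free variable `v`. -/
noncomputable def extFormula (pf : Larith.Formula (Fin 2)) (c : ℕ) :
    Larith.Formula (Fin 1) :=
  extFormulaAt pf c (Term.var 0)

/-- `remoteAt pf dgn t` is the formula `remote(t)`:
`∃x ∃k ∃z (Dgn(x, t) ∧ k = min n : Proof_T(n, t) ∧ z = min m : Proof_T(m, x) ∧ z < k)`. -/
noncomputable def remoteAt {α : Type} (pf dgn : Larith.Formula (Fin 2))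
    (t : Larith.Term α) : Larith.Formula α :=
  Formula.iExs (Fin 3)
    (app2 dgn (Term.var (Sum.inr 0)) (t.relabel Sum.inl) ⊓
      minProofOf pf (t.relabel Sum.inl) (Term.var (Sum.inr 1)) ⊓
      minProofOf pf (Term.var (Sum.inr 0)) (Term.var (Sum.inr 2)) ⊓
      ltF (Term.var (Sum.inr 2)) (Term.var (Sum.inr 1)))

/-- `∃y (remote(y) ∧ Proof_T(t, y))` : `t` is (the code of) a proof of a remote sentence. -/
noncomputable def provesRemoteAt {α : Type} (pf dgn : Larith.Formula (Fin 2))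
    (t : Larith.Term α) : Larith.Formula α :=
  ex1 (remoteAt pf dgn (Term.var (Sum.inr 0)) ⊓
    app2 pf (t.relabel Sum.inl) (Term.var (Sum.inr 0)))

/-- `isKAt pf dgn t` is the defining condition `t = 𝔎`, that is,
`t = min k : ∃y (remote(y) ∧ Proof_T(k, y))`. -/
noncomputable def isKAt {α : Type} (pf dgn : Larith.Formula (Fin 2))
    (t : Larith.Term α) : Larith.Formula α :=
  isMinOf (provesRemoteAt pf dgn (Term.var (Sum.inr 0))) t

/-- `geqKAt pf dgn t` expresses `t ≥ 𝔎`: `∀w (w = 𝔎 → w ≤ t)`. -/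
noncomputable def geqKAt {α : Type} (pf dgn : Larith.Formula (Fin 2))
    (t : Larith.Term α) : Larith.Formula α :=
  all1 (isKAt pf dgn (Term.var (Sum.inr 0)) ⟹
    leF (Term.var (Sum.inr 0)) (t.relabel Sum.inl))

/-- A bundle of the standard arithmetization data for the recursively axiomatized
theory `T`: Gödel's arithmetized proof predicate `ProofF` (i.e. `Proof_T`), a Gödel
coding `code` of sentences, Rosser's arithmetized negation function `negfn`, and the
syntactic diagonalization operator `diag` (satisfying the diagonal lemma). -/
structure GodelSetting (T : Larith.Theory) : Type where
  /-- Gödel's arithmetized provability predicate `Proof_T(x, y)`. -/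
  ProofF : Larith.Formula (Fin 2)
  /-- The arithmetical formula `Dgn(x, y)`. -/
  DgnF : Larith.Formula (Fin 2)
  /-- Gödel coding of sentences. -/
  code : Larith.Sentence → ℕ
  /-- Rosser's arithmetized negation function. -/
  negfn : ℕ → ℕ
  /-- The syntactic diagonalization `φ(v) ↦ D(φ(v))`. -/
  diag : Larith.Formula (Fin 1) → Larith.Sentence
  /-- The diagonal lemma: `T ⊢ D(φ) ↔ φ(⁰⌜D(φ)⌝)`. -/
  diag_spec : ∀ φ : Larith.Formula (Fin 1),
    Proves T (diag φ ⇔ app1 φ (num (code (diag φ))))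
  /-- If `T ⊢ s` then some standard natural number codes a proof of `s`. -/
  proof_complete : ∀ s : Larith.Sentence, Proves T s →
    ∃ n : ℕ, Proves T (app2 ProofF (num n) (num (code s)))
  /-- Conversely, a standardly coded internal proof of `s` yields `T ⊢ s`. -/
  proof_sound : ∀ (s : Larith.Sentence) (n : ℕ),
    Proves T (app2 ProofF (num n) (num (code s))) → Proves T s
  /-- `Proof_T` is a decidable (Δ₁) predicate on standard naturals. -/
  proof_decide : ∀ n m : ℕ,
    Proves T (app2 ProofF (num n) (num m)) ∨ Proves T (∼(app2 ProofF (num n) (num m)))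
  /-- `negfn` sends the code of a sentence to the code of its negation. -/
  negfn_spec : ∀ s : Larith.Sentence, negfn (code s) = code (∼s)

/-- The formula `Dgn(x, y)` represents in `T` the computable map sending the Gödel
code of a sentence `s` to the Gödel code of the diagonal sentence `D(E_s(v))` of
its extension: `T ⊢ Dgn(⁰⌜D(E_s(v))⌝, ⁰⌜s⌝)` and
`T ⊢ ∀x (Dgn(x, ⁰⌜s⌝) → x = ⁰⌜D(E_s(v))⌝)`. -/
def DgnRepresents (T : Larith.Theory) (G : GodelSetting T) : Prop :=
  (∀ s : Larith.Sentence,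
    Proves T (app2 G.DgnF (num (G.code (G.diag (extFormula G.ProofF (G.code s)))))
      (num (G.code s)))) ∧
  (∀ s : Larith.Sentence,
    Proves T (all1 (app2 G.DgnF (Term.var (Sum.inr 0)) (num (G.code s)) ⟹
      Term.equal (Term.var (Sum.inr 0))
        (num (G.code (G.diag (extFormula G.ProofF (G.code s))))))))

namespace Interp

variable {M : Type*} [Larith.Structure M]

def zero : M := Structure.funMap (L := Larith) ArithFunc.zero ![]

def succ (a : M) : M := Structure.funMap (L := Larith) ArithFunc.succ ![a]

def add (a b : M) : M := Structure.funMap (L := Larith) ArithFunc.add ![a, b]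

def Le (a b : M) : Prop := Structure.RelMap (L := Larith) ArithRel.le ![a, b]

def Lt (a b : M) : Prop := Le (succ a) b

def numeral : ℕ → M
  | 0 => zero
  | n + 1 => succ (numeral n)

def IsLeastSat (P : M → Prop) (b : M) : Prop :=
  P b ∧ ∀ w, Lt w b → ¬ P w

instance : Nonempty M := ⟨zero⟩

end Interp

open Interp

section Realize

variable {M : Type*} [Larith.Structure M] {α : Type}

@[simp] lemma realize_num (v : α → M) (n : ℕ) :
    (num n : Larith.Term α).realize v = numeral n := by
  induction n with
  | zero => simp only [num, numeral, Term.realize, zero]; congr; funext i; exact i.elim0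
  | succ n ih =>
    simp only [num, numeral, Term.realize, succ]; congr; funext i; fin_cases i; simpa

@[simp] lemma realize_succT (v : α → M) (t : Larith.Term α) :
    (succT t).realize v = succ (t.realize v) := by
  simp only [succT, Term.realize, succ]; congr; funext i; fin_cases i; simp

@[simp] lemma realize_addT (v : α → M) (t u : Larith.Term α) :
    (addT t u).realize v = add (t.realize v) (u.realize v) := by
  simp only [addT, Term.realize, add]; congr; funext i; fin_cases i <;> simp

@[simp] lemma realize_leF (v : α → M) (t u : Larith.Term α) :
    (leF t u).Realize v ↔ Le (t.realize v) (u.realize v) :=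
  Formula.realize_rel₂

@[simp] lemma realize_ltF (v : α → M) (t u : Larith.Term α) :
    (ltF t u).Realize v ↔ Lt (t.realize v) (u.realize v) := by
  simp only [ltF, realize_leF, realize_succT, Lt]

lemma realize_all1 (φ : Larith.Formula (α ⊕ Fin 1)) (v : α → M) :
    (all1 φ).Realize v ↔ ∀ a : M, φ.Realize (Sum.elim v fun _ => a) := by
  rw [all1, Formula.realize_iAlls]
  refine ⟨fun h a => h _, fun h i => ?_⟩
  rw [show i = fun _ => i 0 from funext fun x => congrArg i (Fin.fin_one_eq_zero x)]
  exact h (i 0)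

lemma realize_ex1 (φ : Larith.Formula (α ⊕ Fin 1)) (v : α → M) :
    (ex1 φ).Realize v ↔ ∃ a : M, φ.Realize (Sum.elim v fun _ => a) := by
  rw [ex1, Formula.realize_iExs]
  refine ⟨fun ⟨i, h⟩ => ⟨i 0, ?_⟩, fun ⟨a, h⟩ => ⟨_, h⟩⟩
  rwa [show i = fun _ => i 0 from funext fun x => congrArg i (Fin.fin_one_eq_zero x)] at h

lemma realize_app1 (φ : Larith.Formula (Fin 1)) (t : Larith.Term α) (v : α → M) :
    (app1 φ t).Realize v ↔ φ.Realize fun _ => t.realize v :=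
  BoundedFormula.realize_subst

lemma realize_app2 (φ : Larith.Formula (Fin 2)) (t u : Larith.Term α) (v : α → M) :
    (app2 φ t u).Realize v ↔ φ.Realize ![t.realize v, u.realize v] := by
  rw [app2, Formula.Realize, BoundedFormula.realize_subst]
  exact iff_of_eq (congrArg₂ _ (funext fun i => by fin_cases i <;> rfl) rfl)

lemma realize_substLast (φ : Larith.Formula (α ⊕ Fin 1)) (t : Larith.Term α) (v : α → M) :
    (substLast φ t).Realize v ↔ φ.Realize (Sum.elim v fun _ => t.realize v) := by
  rw [substLast, Formula.Realize, BoundedFormula.realize_subst]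
  exact iff_of_eq (congrArg₂ _ (funext fun x => by rcases x with x | x <;> rfl) rfl)

lemma realize_isMinOf (φ : Larith.Formula (α ⊕ Fin 1)) (t : Larith.Term α) (v : α → M) :
    (isMinOf φ t).Realize v ↔
      IsLeastSat (fun a => φ.Realize (Sum.elim v fun _ => a)) (t.realize v) := by
  simp [isMinOf, IsLeastSat, realize_substLast, realize_all1, Term.realize_relabel]

lemma realize_closure {k : ℕ} (φ : Larith.Formula (Fin k)) :
    M ⊨ closure φ ↔ ∀ v : Fin k → M, φ.Realize v := by
  simp [closure, Sentence.Realize, Formula.realize_iAlls, Formula.realize_relabel]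

variable (pf dgn : Larith.Formula (Fin 2))

def Remote (y : M) : Prop :=
  ∃ x k z : M, dgn.Realize ![x, y] ∧ IsLeastSat (fun n => pf.Realize ![n, y]) k ∧
    IsLeastSat (fun m => pf.Realize ![m, x]) z ∧ Lt z k

def ProvesRemote (b : M) : Prop :=
  ∃ y : M, Remote pf dgn y ∧ pf.Realize ![b, y]

lemma realize_minProofOf (c t : Larith.Term α) (v : α → M) :
    (minProofOf pf c t).Realize v ↔
      IsLeastSat (fun n => pf.Realize ![n, c.realize v]) (t.realize v) := by
  simp [minProofOf, realize_isMinOf, realize_app2, Term.realize_relabel]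

lemma realize_extFormulaAt (c : ℕ) (t : Larith.Term α) (v : α → M) :
    (extFormulaAt pf c t).Realize v ↔ ∀ x y : M, pf.Realize ![x, t.realize v] →
      IsLeastSat (fun n => pf.Realize ![n, numeral c]) y → Le y x := by
  simp [extFormulaAt, Formula.realize_iAlls, realize_app2, realize_minProofOf,
    Term.realize_relabel, Fin.forall_fin_succ_pi]

lemma realize_remoteAt (t : Larith.Term α) (v : α → M) :
    (remoteAt pf dgn t).Realize v ↔ Remote pf dgn (t.realize v) := by
  simp [remoteAt, Remote, realize_app2, realize_minProofOf, Term.realize_relabel,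
    Fin.exists_fin_succ_pi, Fin.exists_fin_zero_pi, and_assoc]
  rfl

lemma realize_provesRemoteAt (t : Larith.Term α) (v : α → M) :
    (provesRemoteAt pf dgn t).Realize v ↔ ProvesRemote pf dgn (t.realize v) := by
  simp [provesRemoteAt, ProvesRemote, realize_ex1, realize_remoteAt, realize_app2,
    Term.realize_relabel]

lemma realize_isKAt (t : Larith.Term α) (v : α → M) :
    (isKAt pf dgn t).Realize v ↔ IsLeastSat (ProvesRemote pf dgn) (t.realize v) := by
  simp [isKAt, realize_isMinOf, realize_provesRemoteAt]

end Realize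

namespace Interp

variable {M : Type*} [Larith.Structure M]

def IsDefinable (P : M → Prop) : Prop :=
  ∃ (k : ℕ) (φ : Larith.Formula (Fin k ⊕ Fin 1)) (p : Fin k → M),
    ∀ a, φ.Realize (Sum.elim p fun _ => a) ↔ P a

variable [M ⊨ PATheory]

lemma realize_of_closure_mem_QTheory {k : ℕ} {φ : Larith.Formula (Fin k)}
    (h : closure φ ∈ QTheory) (v : Fin k → M) : φ.Realize v :=
  (realize_closure φ).1 (Theory.realize_sentence_of_mem PATheory (Or.inl h)) v

lemma IsDefinable.induction {P : M → Prop} (hP : IsDefinable P) (h0 : P zero)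
    (hs : ∀ a, P a → P (succ a)) (a : M) : P a := by
  obtain ⟨k, φ, p, hφ⟩ := hP
  have h := Theory.realize_sentence_of_mem (M := M) PATheory (Or.inr ⟨k, φ, rfl⟩)
  rw [inductionSentence, realize_closure] at h
  have h := h p
  rw [Formula.realize_imp, Formula.realize_inf, realize_substLast, realize_all1,
    realize_all1] at h
  refine (hφ a).1 (h ⟨?_, fun b hb => ?_⟩ a)
  · simpa [hφ, numeral] using h0
  · refine BoundedFormula.realize_subst.2 ?_
    convert (hφ _).2 (hs b ((hφ b).1 hb)) using 2
    refine iff_of_eq (congrArg (BoundedFormula.Realize φ · default) (funext fun x => ?_))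
    rcases x with x | x <;> simp

lemma succ_ne_zero (a : M) : succ a ≠ zero := by
  simpa [numeral] using realize_of_closure_mem_QTheory (k := 1)
    (φ := ∼(Term.equal (succT (Term.var 0)) (num 0))) (by simp [QTheory]) fun _ => a

lemma succ_injective : Function.Injective (succ : M → M) := fun a b => by
  simpa using realize_of_closure_mem_QTheory (k := 2)
    (φ := Term.equal (succT (Term.var 0)) (succT (Term.var 1)) ⟹ Term.equal (Term.var 0)
      (Term.var 1)) (by simp [QTheory]) ![a, b]

lemma exists_eq_succ_of_ne_zero {a : M} (ha : a ≠ zero) : ∃ b, a = succ b := by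
  simpa [realize_ex1, numeral, ha] using realize_of_closure_mem_QTheory (k := 1)
    (φ := ∼(Term.equal (Term.var 0) (num 0)) ⟹
      ex1 (Term.equal (Term.var (Sum.inl 0)) (succT (Term.var (Sum.inr 0)))))
    (by simp [QTheory]) fun _ => a

lemma add_zero (a : M) : add a zero = a := by
  simpa [numeral] using realize_of_closure_mem_QTheory (k := 1)
    (φ := Term.equal (addT (Term.var 0) (num 0)) (Term.var 0)) (by simp [QTheory]) fun _ => a

lemma add_succ (a b : M) : add a (succ b) = succ (add a b) := by
  simpa using realize_of_closure_mem_QTheory (k := 2)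
    (φ := Term.equal (addT (Term.var 0) (succT (Term.var 1)))
      (succT (addT (Term.var 0) (Term.var 1)))) (by simp [QTheory]) ![a, b]

lemma le_iff_exists_add {a b : M} : Le a b ↔ ∃ c, add c a = b := by
  simpa [realize_ex1] using realize_of_closure_mem_QTheory (k := 2)
    (φ := leF (Term.var 0) (Term.var 1) ⇔ ex1 (Term.equal
      (addT (Term.var (Sum.inr 0)) (Term.var (Sum.inl 0))) (Term.var (Sum.inl 1))))
    (by simp [QTheory]) ![a, b]

lemma zero_add (a : M) : add zero a = a := by
  have hP : IsDefinable fun a : M => add zero a = a :=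
    ⟨0, Term.equal (addT (num 0) (Term.var (Sum.inr 0))) (Term.var (Sum.inr 0)), default,
      fun a => by simp [numeral]⟩
  exact hP.induction (add_zero zero) (fun a ha => by rw [add_succ, ha]) a

lemma succ_add (c a : M) : add (succ c) a = succ (add c a) := by
  have hP : IsDefinable fun a : M => add (succ c) a = succ (add c a) :=
    ⟨1, Term.equal (addT (succT (Term.var (Sum.inl 0))) (Term.var (Sum.inr 0)))
      (succT (addT (Term.var (Sum.inl 0)) (Term.var (Sum.inr 0)))), ![c], fun a => by simp⟩
  exact hP.induction (by rw [add_zero, add_zero]) (fun a ha => by rw [add_succ, add_succ, ha]) a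

lemma add_assoc (a b c : M) : add (add a b) c = add a (add b c) := by
  have hP : IsDefinable fun c : M => add (add a b) c = add a (add b c) :=
    ⟨2, Term.equal (addT (addT (Term.var (Sum.inl 0)) (Term.var (Sum.inl 1)))
      (Term.var (Sum.inr 0))) (addT (Term.var (Sum.inl 0))
      (addT (Term.var (Sum.inl 1)) (Term.var (Sum.inr 0)))), ![a, b], fun c => by simp⟩
  exact hP.induction (by rw [add_zero, add_zero])
    (fun c hc => by rw [add_succ, add_succ, add_succ, hc]) c

lemma le_refl (a : M) : Le a a :=
  le_iff_exists_add.2 ⟨zero, zero_add a⟩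

lemma zero_le (a : M) : Le zero a :=
  le_iff_exists_add.2 ⟨a, add_zero a⟩

lemma le_trans {a b c : M} (hab : Le a b) (hbc : Le b c) : Le a c := by
  obtain ⟨d, rfl⟩ := le_iff_exists_add.1 hab
  obtain ⟨e, rfl⟩ := le_iff_exists_add.1 hbc
  exact le_iff_exists_add.2 ⟨add e d, add_assoc e d a⟩

lemma eq_zero_of_le_zero {a : M} (h : Le a zero) : a = zero := by
  by_contra ha
  obtain ⟨c, hc⟩ := le_iff_exists_add.1 h
  obtain ⟨b, rfl⟩ := exists_eq_succ_of_ne_zero ha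
  exact succ_ne_zero _ (add_succ c b ▸ hc)

lemma succ_le_succ {a b : M} (h : Le a b) : Le (succ a) (succ b) := by
  obtain ⟨c, rfl⟩ := le_iff_exists_add.1 h
  exact le_iff_exists_add.2 ⟨c, add_succ c a⟩

lemma le_of_succ_le_succ {a b : M} (h : Le (succ a) (succ b)) : Le a b := by
  obtain ⟨c, hc⟩ := le_iff_exists_add.1 h
  exact le_iff_exists_add.2 ⟨c, succ_injective (add_succ c a ▸ hc)⟩

lemma le_succ_of_le {a b : M} (h : Le a b) : Le a (succ b) := by
  obtain ⟨c, rfl⟩ := le_iff_exists_add.1 h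
  exact le_iff_exists_add.2 ⟨succ c, succ_add c a⟩

lemma lt_or_eq_of_le {a b : M} (h : Le a b) : Lt a b ∨ a = b := by
  obtain ⟨c, rfl⟩ := le_iff_exists_add.1 h
  by_cases hc : c = zero
  · exact Or.inr (by rw [hc, zero_add])
  · obtain ⟨d, rfl⟩ := exists_eq_succ_of_ne_zero hc
    exact Or.inl (le_iff_exists_add.2 ⟨d, by rw [add_succ, succ_add]⟩)

lemma le_or_eq_of_le_succ {a b : M} (h : Le a (succ b)) : Le a b ∨ a = succ b :=
  (lt_or_eq_of_le h).imp_left le_of_succ_le_succ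

lemma lt_of_le_of_lt {a b c : M} (hab : Le a b) (hbc : Lt b c) : Lt a c :=
  le_trans (succ_le_succ hab) hbc

lemma le_or_lt (a b : M) : Le a b ∨ Lt b a := by
  have hP : IsDefinable fun b : M => ∀ a, Le a b ∨ Lt b a :=
    ⟨0, all1 (leF (Term.var (Sum.inr 0)) (Term.var (Sum.inl (Sum.inr 0))) ⊔
      ltF (Term.var (Sum.inl (Sum.inr 0))) (Term.var (Sum.inr 0))), default,
      fun b => by simp [realize_all1]⟩
  refine hP.induction (fun a => ?_) (fun b hb a => ?_) b a
  · by_cases ha : a = zero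
    · exact Or.inl (ha ▸ le_refl zero)
    · obtain ⟨a', rfl⟩ := exists_eq_succ_of_ne_zero ha
      exact Or.inr (succ_le_succ (zero_le a'))
  · rcases hb a with hab | hba
    · exact Or.inl (le_succ_of_le hab)
    · rcases lt_or_eq_of_le hba with h | rfl
      · exact Or.inr h
      · exact Or.inl (le_refl _)

lemma IsLeastSat.le {P : M → Prop} {a b : M} (hb : IsLeastSat P b) (ha : P a) : Le b a :=
  (le_or_lt b a).resolve_right fun hab => hb.2 a hab ha

lemma not_lt_zero (a : M) : ¬ Lt a zero :=
  fun h => succ_ne_zero a (eq_zero_of_le_zero h)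

lemma IsDefinable.exists_isLeastSat {P : M → Prop} (hP : IsDefinable P) {a : M} (ha : P a) :
    ∃ b, IsLeastSat P b := by
  by_contra hno
  have hbelow : IsDefinable fun n : M => ∀ m, Le m n → ¬ P m := by
    obtain ⟨k, φ, p, hφ⟩ := hP
    let r : Fin k ⊕ Fin 1 → (Fin k ⊕ Fin 1) ⊕ Fin 1 :=
      Sum.elim (Sum.inl ∘ Sum.inl) fun _ => Sum.inr 0
    refine ⟨k, all1 (leF (Term.var (Sum.inr 0)) (Term.var (Sum.inl (Sum.inr 0))) ⟹
      ∼(φ.relabel r)), p, fun n => ?_⟩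
    have hr (m : M) : (Sum.elim (Sum.elim p fun _ => n) fun _ => m) ∘ r =
        Sum.elim p fun _ => m :=
      funext fun x => by rcases x with x | x <;> rfl
    simp [realize_all1, Formula.realize_relabel, hr, hφ]
  refine hbelow.induction (fun m hm hPm => ?_) (fun n hn m hm hPm => ?_) a a (le_refl a) ha
  · exact hno ⟨zero, eq_zero_of_le_zero hm ▸ hPm, fun w hw _ => not_lt_zero w hw⟩
  · rcases le_or_eq_of_le_succ hm with hmn | rfl
    · exact hn m hmn hPm
    · exact hno ⟨succ n, hPm, fun w hw => hn w (le_of_succ_le_succ hw)⟩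

lemma exists_isLeastSat_le {P : M → Prop} (hP : IsDefinable P) {a : M} (ha : P a) :
    ∃ b, IsLeastSat P b ∧ Le b a :=
  (hP.exists_isLeastSat ha).imp fun _ hb => ⟨hb, hb.le ha⟩

lemma eq_numeral_of_le_numeral {a : M} {n : ℕ} (h : Le a (numeral n)) :
    ∃ i ≤ n, a = numeral i := by
  induction n generalizing a with
  | zero => exact ⟨0, le_rfl, eq_zero_of_le_zero h⟩
  | succ n ih =>
    rcases le_or_eq_of_le_succ h with h | rfl
    · obtain ⟨i, hi, rfl⟩ := ih h
      exact ⟨i, hi.trans n.le_succ, rfl⟩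
    · exact ⟨n + 1, le_rfl, rfl⟩

lemma eq_numeral_of_lt_numeral {a : M} {n : ℕ} (h : Lt a (numeral n)) :
    ∃ i < n, a = numeral i := by
  obtain ⟨_ | i, hi, hai⟩ := eq_numeral_of_le_numeral h
  · exact absurd hai (succ_ne_zero a)
  · exact ⟨i, hi, succ_injective hai⟩

lemma numeral_lt_of_forall_not {P : M → Prop} {k : M} (hk : P k)
    (hP : ∀ i, ¬ P (numeral i)) (n : ℕ) : Lt (numeral n) k := by
  refine (le_or_lt k (numeral n)).resolve_left fun hkn => ?_
  obtain ⟨i, -, rfl⟩ := eq_numeral_of_le_numeral hkn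
  exact hP i hk

lemma exists_isLeastSat_numeral {P : M → Prop} {n : ℕ} (hn : P (numeral n)) :
    ∃ i, IsLeastSat P (numeral i) := by
  classical
  have hex : ∃ i, P (numeral i) := ⟨n, hn⟩
  refine ⟨Nat.find hex, Nat.find_spec hex, fun w hw hPw => ?_⟩
  obtain ⟨i, hi, rfl⟩ := eq_numeral_of_lt_numeral hw
  exact Nat.find_min hex hi hPw

end Interp

section Definable

variable {M : Type*} [Larith.Structure M]

lemma isDefinable_realize_numeral (θ : Larith.Formula (Fin 2)) (c : ℕ) :
    IsDefinable fun a : M => θ.Realize ![a, numeral c] :=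
  ⟨0, app2 θ (Term.var (Sum.inr 0)) (num c), default, fun a => by simp [realize_app2]⟩

lemma isDefinable_provesRemote (pf dgn : Larith.Formula (Fin 2)) :
    IsDefinable (ProvesRemote pf dgn : M → Prop) :=
  ⟨0, provesRemoteAt pf dgn (Term.var (Sum.inr 0)), default,
    fun a => by simp [realize_provesRemoteAt]⟩

end Definable

lemma nonempty_modelType_of_consistent {T : Larith.Theory} (hcon : Consistent T) :
    Nonempty (Theory.ModelType.{0, 0, 0} T) := by
  by_contra h
  exact hcon fun M _ _ => (h ⟨M⟩).elim

section Godel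

variable {T : Larith.Theory} (G : GodelSetting T)

noncomputable def godelSentence : Larith.Sentence :=
  G.diag (∼(ex1 (app2 G.ProofF (Term.var (Sum.inr 0)) (Term.var (Sum.inl 0)))))

noncomputable def diagExt (s : Larith.Sentence) : Larith.Sentence :=
  G.diag (extFormula G.ProofF (G.code s))

lemma Proves.realize {M : Type*} [Larith.Structure M] [M ⊨ T] {φ : Larith.Sentence}
    (h : Proves T φ) : M ⊨ φ :=
  Theory.ModelsBoundedFormula.realize_sentence h M

lemma proves_iff_realize (hcomp : Complete T) (M : Type*) [Larith.Structure M] [M ⊨ T]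
    (φ : Larith.Sentence) : Proves T φ ↔ M ⊨ φ :=
  ⟨Proves.realize, fun h => (hcomp φ).resolve_right fun h' => (h'.realize : M ⊨ ∼φ) h⟩

variable {M : Type*} [Larith.Structure M] [M ⊨ T]

lemma realize_app2_num (θ : Larith.Formula (Fin 2)) (n m : ℕ) :
    M ⊨ app2 θ (num n) (num m) ↔ θ.Realize ![(numeral n : M), numeral m] := by
  simp [Sentence.Realize, realize_app2]

lemma realize_diag (φ : Larith.Formula (Fin 1)) :
    M ⊨ G.diag φ ↔ φ.Realize fun _ => (numeral (G.code (G.diag φ)) : M) := by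
  simpa [Sentence.Realize, realize_app1] using (G.diag_spec φ).realize (M := M)

lemma realize_godelSentence : M ⊨ godelSentence G ↔
    ¬ ∃ x : M, G.ProofF.Realize ![x, numeral (G.code (godelSentence G))] := by
  simp [godelSentence, realize_diag, realize_ex1, realize_app2]

lemma realize_diagExt (s : Larith.Sentence) :
    M ⊨ diagExt G s ↔ ∀ x y : M, G.ProofF.Realize ![x, numeral (G.code (diagExt G s))] →
      IsLeastSat (fun n => G.ProofF.Realize ![n, numeral (G.code s)]) y → Le y x := by
  simp [diagExt, realize_diag, extFormula, realize_extFormulaAt]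

variable (hcomp : Complete T)
include hcomp

lemma not_realize_godelSentence : ¬ M ⊨ godelSentence G := fun h => by
  obtain ⟨n, hn⟩ := G.proof_complete _ ((proves_iff_realize hcomp M _).2 h)
  exact (realize_godelSentence G).1 h ⟨_, (realize_app2_num _ _ _).1 hn.realize⟩

lemma exists_proof_godelSentence :
    ∃ x : M, G.ProofF.Realize ![x, numeral (G.code (godelSentence G))] :=
  not_not.1 fun h => not_realize_godelSentence G hcomp ((realize_godelSentence G).2 h)

lemma not_proof_numeral_godelSentence (i : ℕ) :
    ¬ G.ProofF.Realize ![(numeral i : M), numeral (G.code (godelSentence G))] := fun hi => by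
  rcases G.proof_decide i (G.code (godelSentence G)) with h | h
  · exact not_realize_godelSentence G hcomp ((G.proof_sound _ i h).realize (M := M))
  · exact (h.realize : M ⊨ ∼_) ((realize_app2_num _ _ _).2 hi)

lemma remote_of_forall_not_proof_numeral [M ⊨ PATheory] (hdgn : DgnRepresents T G)
    {s : Larith.Sentence} {x : M} (hx : G.ProofF.Realize ![x, numeral (G.code s)])
    (hstd : ∀ i : ℕ, ¬ G.ProofF.Realize ![(numeral i : M), numeral (G.code s)]) :
    Remote G.ProofF G.DgnF (numeral (G.code s) : M) := by
  have hDgn : G.DgnF.Realize ![(numeral (G.code (diagExt G s)) : M), numeral (G.code s)] :=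
    (realize_app2_num _ _ _).1 (hdgn.1 s).realize
  by_cases hd : M ⊨ diagExt G s
  · obtain ⟨k, hk⟩ := (isDefinable_realize_numeral G.ProofF (G.code s)).exists_isLeastSat hx
    obtain ⟨n, hn⟩ := G.proof_complete _ ((proves_iff_realize hcomp M _).2 hd)
    obtain ⟨i, hi⟩ := exists_isLeastSat_numeral
      (P := fun a : M => G.ProofF.Realize ![a, numeral (G.code (diagExt G s))])
      ((realize_app2_num _ _ _).1 hn.realize)
    exact ⟨_, k, _, hDgn, hk, hi, numeral_lt_of_forall_not
      (P := fun a : M => G.ProofF.Realize ![a, numeral (G.code s)]) hk.1 hstd i⟩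
  · simp only [realize_diagExt, not_forall] at hd
    obtain ⟨x, y, hx, hy, hyx⟩ := hd
    obtain ⟨z, hz, hzx⟩ := exists_isLeastSat_le (isDefinable_realize_numeral G.ProofF _) hx
    exact ⟨_, y, z, hDgn, hy, hz, lt_of_le_of_lt hzx ((le_or_lt y x).resolve_left hyx)⟩

end Godel

/-- If `T` is a consistent, complete, recursively axiomatized
first-order theory extending Peano Arithmetic, then there exists at least one
standard sentence `s` such that `T ⊢ remote(⁰⌜s⌝)`; consequently the defining
condition of `𝔎` (the minimal code of a proof of a remote sentence) is
satisfiable in `T`: `T ⊢ ∃x (x = min k : ∃y (remote(y) ∧ Proof_T(k, y)))`. -/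
theorem statement_11 (T : Larith.Theory) (hPA : PATheory ⊆ T) (hcon : Consistent T)
    (hcomp : Complete T) (G : GodelSetting T) (hdgn : DgnRepresents T G) :
    (∃ s : Larith.Sentence, Proves T (remoteAt G.ProofF G.DgnF (num (G.code s)))) ∧
    Proves T (ex1 (isKAt G.ProofF G.DgnF (Term.var (Sum.inr 0)))) := by
  obtain ⟨M⟩ := nonempty_modelType_of_consistent hcon
  have : (M : Type) ⊨ PATheory := Theory.Model.mono inferInstance hPA
  obtain ⟨x, hx⟩ := exists_proof_godelSentence G hcomp (M := M)
  have hrem := remote_of_forall_not_proof_numeral G hcomp hdgn hx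
    (not_proof_numeral_godelSentence G hcomp)
  obtain ⟨b, hb⟩ := (isDefinable_provesRemote _ _).exists_isLeastSat ⟨_, hrem, hx⟩
  refine ⟨⟨godelSentence G, (proves_iff_realize hcomp M _).2 ?_⟩,
    (proves_iff_realize hcomp M _).2 ?_⟩
  · simpa [Sentence.Realize, realize_remoteAt] using hrem
  · simpa [Sentence.Realize, realize_ex1, realize_isKAt] using ⟨b, hb⟩

end GodelStalk
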